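/- arXiv:1706.05546 — 9 statements merged into one kernel-verified Lean document; each statement's English description precedes it below -/
import Mathlib

section
/- For any associative algebra A over F, a ∈ A, integers h, i, j, and x, y ∈ A: (ad_h a)(xy) = q^{h-i} ((ad_i a)(x)) y + q^{j-h} x ((ad_j a)(y)) + q^{j-i}(q^{h-i-j} - q^{i+j-h}) x a y. -/
open Finset

variable {F : Type*} [Field F] {A : Type*} [Ring A] [Algebra F A]

/-- The quantum adjoint map `ad_r a : x ↦ q^r a x - q^{-r} x a`. -/
noncomputable def qad (q : F) (a : A) (r : ℤ) (x : A) : A :=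
  q ^ r • (a * x) - q ^ (-r) • (x * a)

/-- `bad_m a` : the balanced version of `ad`. -/
noncomputable def bad (q : F) (a : A) : ℕ → A → A
  | 0, x => (q - q⁻¹)⁻¹ • qad q a 0 x
  | (m + 1), x =>
      (((q ^ (2 * (m + 1) : ℤ) - q ^ (-(2 * (m + 1)) : ℤ)) *
          (q ^ (2 * (m + 1) + 1 : ℤ) - q ^ (-(2 * (m + 1)) - 1 : ℤ)))⁻¹) •
        ((q ^ (2 * (m + 1) : ℤ) - q ^ (-(2 * (m + 1)) : ℤ)) ^ 2 • x +
          qad q a ((m : ℤ) + 1) (qad q a (-((m : ℤ) + 1)) x))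

/-- `(bad a)_m = bad_{m-1} a ∘ ⋯ ∘ bad_0 a`, with `(bad a)_0 = id`. -/
noncomputable def badProd (q : F) (a : A) : ℕ → A → A
  | 0 => id
  | (m + 1) => bad q a m ∘ badProd q a m

/-- `S_m = (bad a)_m ∘ (ad_m a) / (q^{2m} - q^{-2m})`, with `S_0 = id`. -/
noncomputable def Smap (q : F) (a : A) : ℕ → A → A
  | 0 => id
  | (m + 1) => fun x =>
      (q ^ (2 * (m + 1) : ℤ) - q ^ (-(2 * (m + 1)) : ℤ))⁻¹ •
        badProd q a (m + 1) (qad q a ((m : ℤ) + 1) x)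

/-- `S'_m = (bad a)_m ∘ (ad_{-m} a) / (q^{2m} - q^{-2m})`, with `S'_0 = id`. -/
noncomputable def Smap' (q : F) (a : A) : ℕ → A → A
  | 0 => id
  | (m + 1) => fun x =>
      (q ^ (2 * (m + 1) : ℤ) - q ^ (-(2 * (m + 1)) : ℤ))⁻¹ •
        badProd q a (m + 1) (qad q a (-((m : ℤ) + 1)) x)

theorem qad_mul_eq (q : F) (a : A) (r : ℤ) (x y : A) :
    qad q a r x * y = q ^ r • (a * x * y) - q ^ (-r) • (x * a * y) := by
  simp only [qad, sub_mul, smul_mul_assoc, mul_assoc]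

theorem mul_qad_eq (q : F) (a : A) (r : ℤ) (x y : A) :
    x * qad q a r y = q ^ r • (x * a * y) - q ^ (-r) • (x * y * a) := by
  simp only [qad, mul_sub, mul_smul_comm, mul_assoc]

theorem stmt2_general (q : F) (hq : q ≠ 0) (a : A) (h i j : ℤ) (x y : A) :
    qad q a h (x * y) =
      q ^ (h - i) • (qad q a i x * y) + q ^ (j - h) • (x * qad q a j y) +
        (q ^ (j - i) * (q ^ (h - i - j) - q ^ (i + j - h))) • (x * a * y) := by
  rw [qad_mul_eq, mul_qad_eq, qad, ← mul_assoc]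
  -- Compare coefficients of `a * x * y`, `x * y * a` and `x * a * y`; the last is `0` on both sides.
  match_scalars <;> simp only [mul_one, mul_neg, mul_sub, ← zpow_add₀ hq] <;> ring_nf

theorem stmt2 (q : F) (hq : q ≠ 0) (hroot : ∀ n : ℕ, 0 < n → q ^ n ≠ 1) (a : A) (h i j : ℤ) (x y : A) :
    qad q a h (x * y) =
      q ^ (h - i) • (qad q a i x * y) + q ^ (j - h) • (x * qad q a j y) +
        (q ^ (j - i) * (q ^ (h - i - j) - q ^ (i + j - h))) • (x * a * y) :=
  stmt2_general q hq a h i j x y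
end

section
/- For any associative algebra A over F, a ∈ A, positive integer i, and x ∈ A: (S_i ∘ S'_i)(x) + ((bad a)_i ∘ (bad a)_i)(x) = ((q^{2i+1} - q^{-2i-1})/(q^{2i} - q^{-2i})) ((bad a)_i ∘ (bad a)_{i+1})(x). -/
/-!
All maps involved are `F`-linear and commute with every `ad_r a`, because left and right
multiplication by `a` commute. Writing `c = q^{2i} - q^{-2i}` and `d = q^{2i+1} - q^{-2i-1}`,
we have `(bad a)_{i+1} = bad_i a ∘ (bad a)_i` with `bad_i a = (c² + ad_i a ∘ ad_{-i} a) / (c d)`,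
so both sides equal `c⁻² (bad a)_i ∘ (c² + ad_i a ∘ ad_{-i} a) ∘ (bad a)_i`. Since `q` is not a
root of unity, `c` and `d` do not vanish.
-/

open Finset

variable {F : Type*} [Field F] {A : Type*} [Ring A] [Algebra F A]

lemma zpow_ne_one_of_not_root {G₀ : Type*} [GroupWithZero G₀] {q : G₀}
    (hroot : ∀ n : ℕ, 0 < n → q ^ n ≠ 1) {k : ℤ} (hk : k ≠ 0) : q ^ k ≠ 1 := by
  have hn : 0 < k.natAbs := Int.natAbs_pos.mpr hk
  rcases Int.natAbs_eq k with hk' | hk' <;> rw [hk']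
  · simpa only [zpow_natCast] using hroot _ hn
  · simpa only [zpow_neg, zpow_natCast, ne_eq, inv_eq_one] using hroot _ hn

lemma zpow_sub_zpow_ne_zero_of_not_root {K : Type*} [DivisionRing K] {q : K} (hq : q ≠ 0)
    (hroot : ∀ n : ℕ, 0 < n → q ^ n ≠ 1) {r s : ℤ} (hrs : r ≠ s) : q ^ r - q ^ s ≠ 0 := by
  rw [sub_ne_zero, Ne, ← div_eq_one_iff_eq (zpow_ne_zero s hq), ← zpow_sub₀ hq]
  exact zpow_ne_one_of_not_root hroot (sub_ne_zero.mpr hrs)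

section QuantumAdjoint

variable (q : F) (a : A)

lemma qad_smul (r : ℤ) (c : F) (x : A) : qad q a r (c • x) = c • qad q a r x := by
  simp only [qad, smul_mul_assoc, mul_smul_comm, smul_comm _ c, smul_sub]

lemma qad_add (r : ℤ) (x y : A) : qad q a r (x + y) = qad q a r x + qad q a r y := by
  simp only [qad, mul_add, add_mul, smul_add]
  abel

lemma qad_comm (r s : ℤ) (x : A) : qad q a r (qad q a s x) = qad q a s (qad q a r x) := by
  simp only [qad, mul_sub, sub_mul, smul_sub, smul_mul_assoc, mul_smul_comm, smul_smul, mul_assoc]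
  rw [mul_comm (q ^ r) (q ^ s), mul_comm (q ^ r) (q ^ (-s)), mul_comm (q ^ (-r)) (q ^ s),
    mul_comm (q ^ (-r)) (q ^ (-s))]
  abel

lemma bad_smul (m : ℕ) (c : F) (x : A) : bad q a m (c • x) = c • bad q a m x := by
  cases m with
  | zero => simp only [bad, qad_smul, smul_comm _ c]
  | succ m => simp only [bad, qad_smul, smul_add, smul_comm _ c]

lemma bad_add (m : ℕ) (x y : A) : bad q a m (x + y) = bad q a m x + bad q a m y := by
  cases m with
  | zero => simp only [bad, qad_add, smul_add]
  | succ m =>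
    simp only [bad, qad_add, smul_add]
    abel

lemma bad_qad_comm (m : ℕ) (r : ℤ) (x : A) : bad q a m (qad q a r x) = qad q a r (bad q a m x) := by
  cases m with
  | zero => rw [bad, bad, qad_smul, qad_comm]
  | succ m => rw [bad, bad, qad_smul, qad_add, qad_smul, qad_comm q a r, qad_comm q a r]

lemma badProd_succ_apply (m : ℕ) (x : A) : badProd q a (m + 1) x = bad q a m (badProd q a m x) :=
  rfl

lemma badProd_smul (m : ℕ) (c : F) (x : A) : badProd q a m (c • x) = c • badProd q a m x := by
  induction m with
  | zero => rfl
  | succ m ih => simp only [badProd, Function.comp_apply, ih, bad_smul]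

lemma badProd_add (m : ℕ) (x y : A) :
    badProd q a m (x + y) = badProd q a m x + badProd q a m y := by
  induction m with
  | zero => rfl
  | succ m ih => simp only [badProd, Function.comp_apply, ih, bad_add]

lemma badProd_qad_comm (m : ℕ) (r : ℤ) (x : A) :
    badProd q a m (qad q a r x) = qad q a r (badProd q a m x) := by
  induction m with
  | zero => rfl
  | succ m ih => simp only [badProd, Function.comp_apply, ih, bad_qad_comm]

lemma Smap_Smap'_succ (m : ℕ) (x : A) :
    Smap q a (m + 1) (Smap' q a (m + 1) x) =
      (q ^ (2 * ((m : ℤ) + 1)) - q ^ (-(2 * ((m : ℤ) + 1))))⁻¹ ^ 2 •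
        badProd q a (m + 1) (qad q a (m + 1) (qad q a (-(m + 1)) (badProd q a (m + 1) x))) := by
  simp only [Smap, Smap', qad_smul, badProd_smul, badProd_qad_comm, smul_smul, sq]

end QuantumAdjoint

theorem stmt6 (q : F) (hq : q ≠ 0) (hroot : ∀ n : ℕ, 0 < n → q ^ n ≠ 1) (a : A) (i : ℕ) (hi : 0 < i) (x : A) :
    Smap q a i (Smap' q a i x) + badProd q a i (badProd q a i x) =
      ((q ^ (2 * (i : ℤ) + 1) - q ^ (-(2 * (i : ℤ)) - 1)) / (q ^ (2 * (i : ℤ)) - q ^ (-(2 * (i : ℤ))))) •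
        badProd q a i (badProd q a (i + 1) x) := by
  obtain ⟨m, rfl⟩ := Nat.exists_eq_add_one_of_ne_zero hi.ne'
  have hc : q ^ (2 * ((m : ℤ) + 1)) - q ^ (-(2 * ((m : ℤ) + 1))) ≠ 0 :=
    zpow_sub_zpow_ne_zero_of_not_root hq hroot (by omega)
  have hd : q ^ (2 * ((m : ℤ) + 1) + 1) - q ^ (-(2 * ((m : ℤ) + 1)) - 1) ≠ 0 :=
    zpow_sub_zpow_ne_zero_of_not_root hq hroot (by omega)
  rw [Smap_Smap'_succ, badProd_succ_apply q a (m + 1), bad]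
  simp only [badProd_smul, badProd_add, badProd_qad_comm]
  match_scalars <;> field_simp
end

section
/- For any associative algebra A over F, a ∈ A, and n ∈ ℕ, the following operator identity holds: (∑_{i=0}^n S_i) ∘ (∑_{j=0}^n S'_j) = I + (bad a)_{n+1} ∘ (∑_{r=0}^{n-1} ((q^{2n+1} - q^{-2n-1})/(q^{n+r+1} - q^{-n-r-1})) (bad a)_{r+1}). -/
open Finset

variable {F : Type*} [Field F] {A : Type*} [Ring A] [Algebra F A]

/-! All the operators involved are polynomials in the commuting operators `x ↦ a * x` and
`x ↦ x * a`, so the identity can be proved in a commutative `F`-algebra, with two elements `ℓ`, `ρ`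
standing for these operators. Writing `(k) = q ^ k - q ^ (-k)`, the double sum `∑ S_i S'_j` is
symmetrized with `(r + s) (ad_r ad_{-s} + ad_s ad_{-r}) = (2r) ad_s ad_{-s} + (2s) ad_r ad_{-r}`,
after which `ad_m ad_{-m} = (2m) (2m+1) bad_m - (2m)²` turns every term into a multiple of some
`(bad a)_i (bad a)_j`. What is left is a telescoping sum, whose boundary term is the right-hand
side, plus a sum of terms whose coefficients are antisymmetric in `(i, j)` while
`(bad a)_i (bad a)_j` is symmetric. -/

theorem sum_sum_eq_sum_sum_of_add_swap {ι M : Type*} [AddCommGroup M] (s : Finset ι)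
    (f g : ι → ι → M) (hswap : ∀ i j, f i j + f j i = g i j + g j i)
    (hdiag : ∀ i, f i i = g i i) :
    ∑ i ∈ s, ∑ j ∈ s, f i j = ∑ i ∈ s, ∑ j ∈ s, g i j := by
  rw [← sub_eq_zero, ← sum_sub_distrib]
  simp_rw [← sum_sub_distrib]
  rw [← sum_product' (f := fun i j => f i j - g i j)]
  refine sum_involution (fun p _ => p.swap) (fun ⟨i, j⟩ _ => ?_) (fun ⟨i, j⟩ _ hne => ?_)
    (by simp [and_comm]) (by simp)
  · rw [Prod.fst_swap, Prod.snd_swap, sub_add_sub_comm, hswap, sub_self]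
  · intro h
    obtain rfl : j = i := congrArg Prod.fst h
    exact hne (sub_eq_zero.2 (hdiag j))

noncomputable def qDiff (q : F) (k : ℤ) : F := q ^ k - q ^ (-k)

section QDiff

variable {q : F}

theorem zpow_ne_one_of_forall_pow_ne_one (hroot : ∀ n : ℕ, 0 < n → q ^ n ≠ 1) {k : ℤ}
    (hk : k ≠ 0) : q ^ k ≠ 1 := by
  obtain ⟨m, rfl | rfl⟩ := Int.eq_nat_or_neg k
  · simpa using hroot m (by omega)
  · simpa using hroot m (by omega)

theorem qDiff_ne_zero (hq : q ≠ 0) (hroot : ∀ n : ℕ, 0 < n → q ^ n ≠ 1) {k : ℤ} (hk : k ≠ 0) :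
    qDiff q k ≠ 0 := by
  rw [qDiff, sub_ne_zero]
  intro h
  apply zpow_ne_one_of_forall_pow_ne_one hroot (show 2 * k ≠ 0 by omega)
  rw [two_mul, zpow_add₀ hq]
  nth_rw 1 [h]
  rw [← zpow_add₀ hq, neg_add_cancel, zpow_zero]

theorem qDiff_add_add_qDiff_sub (hq : q ≠ 0) (s t : ℤ) :
    qDiff q (s + t) + qDiff q (s - t) = qDiff q s * (q ^ t + q ^ (-t)) := by
  simp only [qDiff, neg_add, neg_sub, zpow_add₀ hq, zpow_sub₀ hq, zpow_neg]
  field_simp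
  ring

end QDiff

section CommutativeModel

variable {C : Type*} [CommRing C] [Algebra F C] (q : F) (ℓ ρ : C)

noncomputable def qadC (r : ℤ) : C := q ^ r • ℓ - q ^ (-r) • ρ

noncomputable def badC : ℕ → C
  | 0 => (qDiff q 1)⁻¹ • qadC q ℓ ρ 0
  | (m + 1) => (qDiff q (2 * (m + 1)) * qDiff q (2 * (m + 1) + 1))⁻¹ •
      (qDiff q (2 * (m + 1)) ^ 2 • 1 + qadC q ℓ ρ (m + 1) * qadC q ℓ ρ (-(m + 1)))

noncomputable def badProdC (m : ℕ) : C := ∏ k ∈ range m, badC q ℓ ρ k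

noncomputable def SmapC : ℕ → C
  | 0 => 1
  | (m + 1) => (qDiff q (2 * (m + 1)))⁻¹ • (badProdC q ℓ ρ (m + 1) * qadC q ℓ ρ (m + 1))

noncomputable def SmapC' : ℕ → C
  | 0 => 1
  | (m + 1) => (qDiff q (2 * (m + 1)))⁻¹ • (badProdC q ℓ ρ (m + 1) * qadC q ℓ ρ (-(m + 1)))

noncomputable def termC (k : ℤ) (i j : ℕ) : C :=
  (qDiff q (2 * j + k) / qDiff q (i + j + k)) •
    (badProdC q ℓ ρ (i + 1) * badProdC q ℓ ρ (j + 1))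

variable {q}

theorem qadC_add_qadC_neg (r : ℤ) :
    qadC q ℓ ρ r + qadC q ℓ ρ (-r) = (q ^ r + q ^ (-r)) • qadC q ℓ ρ 0 := by
  simp only [qadC, neg_neg, neg_zero, zpow_zero, one_smul]
  module

theorem qDiff_smul_qadC_mul_add (hq : q ≠ 0) (r s : ℤ) :
    qDiff q (r + s) • (qadC q ℓ ρ r * qadC q ℓ ρ (-s) + qadC q ℓ ρ s * qadC q ℓ ρ (-r)) =
      qDiff q (2 * r) • (qadC q ℓ ρ s * qadC q ℓ ρ (-s)) +
        qDiff q (2 * s) • (qadC q ℓ ρ r * qadC q ℓ ρ (-r)) := by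
  simp only [qadC, qDiff, sub_mul, mul_sub, smul_mul_smul_comm, mul_comm ρ ℓ, neg_neg, two_mul,
    neg_add, zpow_add₀ hq, zpow_neg]
  match_scalars <;> field_simp <;> ring

theorem qadC_zero_eq_smul_badC (hq : q ≠ 0) (hroot : ∀ n : ℕ, 0 < n → q ^ n ≠ 1) :
    qadC q ℓ ρ 0 = qDiff q 1 • badC q ℓ ρ 0 := by
  rw [badC, smul_smul, mul_inv_cancel₀ (qDiff_ne_zero hq hroot one_ne_zero), one_smul]

theorem qadC_mul_qadC_neg (hq : q ≠ 0) (hroot : ∀ n : ℕ, 0 < n → q ^ n ≠ 1) (m : ℕ) :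
    qadC q ℓ ρ (m + 1) * qadC q ℓ ρ (-(m + 1)) =
      (qDiff q (2 * (m + 1)) * qDiff q (2 * (m + 1) + 1)) • badC q ℓ ρ (m + 1) -
        qDiff q (2 * (m + 1)) ^ 2 • 1 := by
  rw [badC, smul_smul, mul_inv_cancel₀ (mul_ne_zero (qDiff_ne_zero hq hroot (by omega))
    (qDiff_ne_zero hq hroot (by omega))), one_smul, add_sub_cancel_left]

theorem SmapC_add_SmapC' (hq : q ≠ 0) (hroot : ∀ n : ℕ, 0 < n → q ^ n ≠ 1) (i : ℕ) :
    SmapC q ℓ ρ (i + 1) + SmapC' q ℓ ρ (i + 1) = termC q ℓ ρ 1 i 0 := by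
  have hdouble :
      qDiff q (2 * (i + 1)) = qDiff q (i + 1) * (q ^ (i + 1 : ℤ) + q ^ (-(i + 1) : ℤ)) := by
    simpa [two_mul, qDiff] using qDiff_add_add_qDiff_sub hq (i + 1) (i + 1)
  have h2 : qDiff q (2 * (i + 1)) ≠ 0 := qDiff_ne_zero hq hroot (by omega)
  have hsum : q ^ (i + 1 : ℤ) + q ^ (-(i + 1) : ℤ) ≠ 0 := right_ne_zero_of_mul (hdouble ▸ h2)
  rw [SmapC, SmapC', termC, ← smul_add, ← mul_add, qadC_add_qadC_neg,
    qadC_zero_eq_smul_badC ℓ ρ hq hroot]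
  simp only [Nat.cast_zero, mul_zero, zero_add, add_zero, mul_smul_comm, smul_smul]
  congr 1
  · rw [hdouble]
    field_simp
  · simp [badProdC]

theorem SmapC_mul_SmapC' (i j : ℕ) :
    SmapC q ℓ ρ (i + 1) * SmapC' q ℓ ρ (j + 1) =
      (qDiff q (2 * (i + 1)) * qDiff q (2 * (j + 1)))⁻¹ •
        (badProdC q ℓ ρ (i + 1) * badProdC q ℓ ρ (j + 1) *
          (qadC q ℓ ρ (i + 1) * qadC q ℓ ρ (-(j + 1)))) := by
  rw [SmapC, SmapC', smul_mul_smul_comm, mul_inv]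
  ring_nf

theorem termC_succ_sub_termC (hq : q ≠ 0) (hroot : ∀ n : ℕ, 0 < n → q ^ n ≠ 1) (i j : ℕ) :
    termC q ℓ ρ 1 i (j + 1) - termC q ℓ ρ 2 i j =
      (qDiff q (2 * (j + 1)) * qDiff q (i + 1 + (j + 1)))⁻¹ •
        (badProdC q ℓ ρ (i + 1) * badProdC q ℓ ρ (j + 1) *
          (qadC q ℓ ρ (j + 1) * qadC q ℓ ρ (-(j + 1)))) := by
  have h1 : qDiff q (2 * (j + 1)) ≠ 0 := qDiff_ne_zero hq hroot (by omega)
  have hB : badProdC q ℓ ρ (j + 1 + 1) = badProdC q ℓ ρ (j + 1) * badC q ℓ ρ (j + 1) :=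
    prod_range_succ _ _
  rw [qadC_mul_qadC_neg ℓ ρ hq hroot, termC, termC, hB]
  push_cast
  simp only [mul_sub, mul_smul_comm, mul_one, smul_sub, smul_smul, ← mul_assoc]
  match_scalars <;> field_simp <;> ring_nf

theorem SmapC_mul_SmapC'_add_swap (hq : q ≠ 0) (hroot : ∀ n : ℕ, 0 < n → q ^ n ≠ 1) (i j : ℕ) :
    SmapC q ℓ ρ (i + 1) * SmapC' q ℓ ρ (j + 1) + SmapC q ℓ ρ (j + 1) * SmapC' q ℓ ρ (i + 1) =
      (termC q ℓ ρ 1 i (j + 1) - termC q ℓ ρ 2 i j) +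
        (termC q ℓ ρ 1 j (i + 1) - termC q ℓ ρ 2 j i) := by
  have hi : qDiff q (2 * (i + 1)) ≠ 0 := qDiff_ne_zero hq hroot (by omega)
  have hj : qDiff q (2 * (j + 1)) ≠ 0 := qDiff_ne_zero hq hroot (by omega)
  have hij : qDiff q (i + 1 + (j + 1)) ≠ 0 := qDiff_ne_zero hq hroot (by omega)
  have key := congrArg (badProdC q ℓ ρ (i + 1) * badProdC q ℓ ρ (j + 1) * ·)
    (qDiff_smul_qadC_mul_add ℓ ρ hq (i + 1) (j + 1))
  simp only [mul_add (badProdC q ℓ ρ (i + 1) * badProdC q ℓ ρ (j + 1)), mul_smul_comm] at key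
  rw [SmapC_mul_SmapC', SmapC_mul_SmapC', termC_succ_sub_termC ℓ ρ hq hroot,
    termC_succ_sub_termC ℓ ρ hq hroot, mul_comm (badProdC q ℓ ρ (j + 1)), add_comm ((j : ℤ) + 1)]
  linear_combination (norm := skip)
    (qDiff q (2 * (i + 1)) * qDiff q (2 * (j + 1)) * qDiff q (i + 1 + (j + 1)))⁻¹ • key
  simp only [smul_add, smul_smul, mul_assoc]
  match_scalars <;> field_simp <;> ring

theorem SmapC_mul_SmapC'_self (hq : q ≠ 0) (hroot : ∀ n : ℕ, 0 < n → q ^ n ≠ 1) (i : ℕ) :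
    SmapC q ℓ ρ (i + 1) * SmapC' q ℓ ρ (i + 1) =
      termC q ℓ ρ 1 i (i + 1) - termC q ℓ ρ 2 i i := by
  rw [SmapC_mul_SmapC', termC_succ_sub_termC ℓ ρ hq hroot, two_mul]

theorem termC_add_termC_swap (hq : q ≠ 0) (hroot : ∀ n : ℕ, 0 < n → q ^ n ≠ 1) {k : ℤ}
    (hk : 0 < k) (i j : ℕ) :
    termC q ℓ ρ k i j + termC q ℓ ρ k j i =
      (q ^ ((j : ℤ) - i) + q ^ ((i : ℤ) - j)) •
        (badProdC q ℓ ρ (i + 1) * badProdC q ℓ ρ (j + 1)) := by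
  have hs : qDiff q (i + j + k) ≠ 0 := qDiff_ne_zero hq hroot (by omega)
  rw [termC, termC, mul_comm (badProdC q ℓ ρ (j + 1)), add_comm (j : ℤ) i, ← add_smul, ← add_div,
    show 2 * (j : ℤ) + k = (i + j + k) + (j - i) by ring,
    show 2 * (i : ℤ) + k = (i + j + k) - (j - i) by ring,
    qDiff_add_add_qDiff_sub hq, mul_div_cancel_left₀ _ hs, neg_sub]

theorem termC_self (hq : q ≠ 0) (hroot : ∀ n : ℕ, 0 < n → q ^ n ≠ 1) {k : ℤ} (hk : 0 < k)
    (i : ℕ) :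
    termC q ℓ ρ k i i = badProdC q ℓ ρ (i + 1) * badProdC q ℓ ρ (i + 1) := by
  rw [termC, ← two_mul, div_self (qDiff_ne_zero hq hroot (by omega)), one_smul]

theorem sum_SmapC_mul_sum_SmapC' (hq : q ≠ 0) (hroot : ∀ n : ℕ, 0 < n → q ^ n ≠ 1) (n : ℕ) :
    (∑ i ∈ range (n + 1), SmapC q ℓ ρ i) * ∑ j ∈ range (n + 1), SmapC' q ℓ ρ j =
      1 + badProdC q ℓ ρ (n + 1) *
        ∑ r ∈ range n, (qDiff q (2 * n + 1) / qDiff q (n + r + 1)) • badProdC q ℓ ρ (r + 1) := by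
  have hdouble : ∑ i ∈ range n, ∑ j ∈ range n, SmapC q ℓ ρ (i + 1) * SmapC' q ℓ ρ (j + 1) =
      ∑ i ∈ range n, ∑ j ∈ range n, (termC q ℓ ρ 1 i (j + 1) - termC q ℓ ρ 2 i j) :=
    sum_sum_eq_sum_sum_of_add_swap _ _ _ (SmapC_mul_SmapC'_add_swap ℓ ρ hq hroot)
      (SmapC_mul_SmapC'_self ℓ ρ hq hroot)
  have hanti : ∑ i ∈ range n, ∑ j ∈ range n, termC q ℓ ρ 1 i j =
      ∑ i ∈ range n, ∑ j ∈ range n, termC q ℓ ρ 2 i j :=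
    sum_sum_eq_sum_sum_of_add_swap _ _ _
      (fun i j => by
        rw [termC_add_termC_swap ℓ ρ hq hroot one_pos, termC_add_termC_swap ℓ ρ hq hroot two_pos])
      (fun i => by rw [termC_self ℓ ρ hq hroot one_pos, termC_self ℓ ρ hq hroot two_pos])
  have htel : ∀ i,
      termC q ℓ ρ 1 i 0 + ∑ j ∈ range n, (termC q ℓ ρ 1 i (j + 1) - termC q ℓ ρ 2 i j) =
        termC q ℓ ρ 1 i n +
          (∑ j ∈ range n, termC q ℓ ρ 1 i j - ∑ j ∈ range n, termC q ℓ ρ 2 i j) := by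
    intro i
    rw [sum_sub_distrib, ← add_sub_assoc, add_comm (termC q ℓ ρ 1 i 0), ← sum_range_succ',
      sum_range_succ]
    abel
  calc _ = 1 + (∑ i ∈ range n, (SmapC q ℓ ρ (i + 1) + SmapC' q ℓ ρ (i + 1)) +
        ∑ i ∈ range n, ∑ j ∈ range n, SmapC q ℓ ρ (i + 1) * SmapC' q ℓ ρ (j + 1)) := by
        rw [sum_range_succ', sum_range_succ', sum_add_distrib, ← sum_mul_sum, SmapC, SmapC']
        ring
    _ = 1 + ∑ i ∈ range n, termC q ℓ ρ 1 i n := by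
        rw [sum_congr rfl fun i _ => SmapC_add_SmapC' ℓ ρ hq hroot i, hdouble, ← sum_add_distrib,
          sum_congr rfl fun i _ => htel i, sum_add_distrib, sum_sub_distrib, hanti, sub_self,
          add_zero]
    _ = _ := by
        rw [mul_sum]
        refine congrArg _ (sum_congr rfl fun i _ => ?_)
        rw [termC, mul_smul_comm, mul_comm (badProdC q ℓ ρ (i + 1)), add_comm (i : ℤ)]

end CommutativeModel

section Transfer

variable {C : Type*} [CommRing C] [Algebra F C] (φ : C →ₐ[F] Module.End F A) {q : F} {a : A}
  {ℓ ρ : C}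

theorem qad_eq_apply (hℓ : φ ℓ = LinearMap.mulLeft F a) (hρ : φ ρ = LinearMap.mulRight F a)
    (r : ℤ) (x : A) : qad q a r x = φ (qadC q ℓ ρ r) x := by
  simp [qad, qadC, hℓ, hρ]

theorem bad_eq_apply (hℓ : φ ℓ = LinearMap.mulLeft F a) (hρ : φ ρ = LinearMap.mulRight F a)
    (m : ℕ) (x : A) : bad q a m x = φ (badC q ℓ ρ m) x := by
  cases m with
  | zero => simp [bad, badC, qad_eq_apply φ hℓ hρ, qDiff]
  | succ m =>
    rw [bad, badC, show -(2 * ((m : ℤ) + 1)) - 1 = -(2 * (m + 1) + 1) by ring]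
    simp [qad_eq_apply φ hℓ hρ, qDiff, Module.End.mul_apply]

theorem badProd_eq_apply (hℓ : φ ℓ = LinearMap.mulLeft F a) (hρ : φ ρ = LinearMap.mulRight F a)
    (m : ℕ) (x : A) : badProd q a m x = φ (badProdC q ℓ ρ m) x := by
  induction m generalizing x with
  | zero => simp [badProd, badProdC]
  | succ m ih =>
    simp [badProd, badProdC, prod_range_succ, ih, bad_eq_apply φ hℓ hρ, Module.End.mul_apply,
      mul_comm]

theorem Smap_eq_apply (hℓ : φ ℓ = LinearMap.mulLeft F a) (hρ : φ ρ = LinearMap.mulRight F a)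
    (m : ℕ) (x : A) : Smap q a m x = φ (SmapC q ℓ ρ m) x := by
  cases m with
  | zero => simp [Smap, SmapC]
  | succ m =>
    simp [Smap, SmapC, qDiff, badProd_eq_apply φ hℓ hρ, qad_eq_apply φ hℓ hρ,
      Module.End.mul_apply]

theorem Smap'_eq_apply (hℓ : φ ℓ = LinearMap.mulLeft F a) (hρ : φ ρ = LinearMap.mulRight F a)
    (m : ℕ) (x : A) : Smap' q a m x = φ (SmapC' q ℓ ρ m) x := by
  cases m with
  | zero => simp [Smap', SmapC']
  | succ m =>
    simp [Smap', SmapC', qDiff, badProd_eq_apply φ hℓ hρ, qad_eq_apply φ hℓ hρ,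
      Module.End.mul_apply]

theorem sum_Smap_sum_Smap'_of_algHom (hℓ : φ ℓ = LinearMap.mulLeft F a)
    (hρ : φ ρ = LinearMap.mulRight F a) (hq : q ≠ 0) (hroot : ∀ n : ℕ, 0 < n → q ^ n ≠ 1)
    (n : ℕ) (x : A) :
    ∑ i ∈ range (n + 1), Smap q a i (∑ j ∈ range (n + 1), Smap' q a j x) =
      x + badProd q a (n + 1)
        (∑ r ∈ range n,
          ((q ^ (2 * (n : ℤ) + 1) - q ^ (-(2 * (n : ℤ)) - 1)) /
              (q ^ ((n : ℤ) + r + 1) - q ^ (-((n : ℤ) + r + 1)))) •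
            badProd q a (r + 1) x) := by
  calc _ = φ ((∑ i ∈ range (n + 1), SmapC q ℓ ρ i) * ∑ j ∈ range (n + 1), SmapC' q ℓ ρ j) x := by
        simp [Smap_eq_apply φ hℓ hρ, Smap'_eq_apply φ hℓ hρ, LinearMap.sum_apply]
        exact sum_comm
    _ = _ := by
        rw [sum_SmapC_mul_sum_SmapC' ℓ ρ hq hroot n, ← neg_add']
        simp [badProd_eq_apply φ hℓ hρ, LinearMap.sum_apply, qDiff]

end Transfer

theorem stmt7 (q : F) (hq : q ≠ 0) (hroot : ∀ n : ℕ, 0 < n → q ^ n ≠ 1) (a : A) (n : ℕ) (x : A) :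
    ∑ i ∈ Finset.range (n + 1), Smap q a i (∑ j ∈ Finset.range (n + 1), Smap' q a j x) =
      x + badProd q a (n + 1)
        (∑ r ∈ Finset.range n,
          ((q ^ (2 * (n : ℤ) + 1) - q ^ (-(2 * (n : ℤ)) - 1)) /
              (q ^ ((n : ℤ) + r + 1) - q ^ (-((n : ℤ) + r + 1)))) •
            badProd q a (r + 1) x) := by
  have hcomm := LinearMap.commute_mulLeft_right (R := F) a a
  let C := Algebra.adjoin F {LinearMap.mulLeft F a, LinearMap.mulRight F a}
  have : IsMulCommutative C := Algebra.isMulCommutative_adjoin F <| by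
    simp only [Set.mem_insert_iff, Set.mem_singleton_iff]
    rintro x (rfl | rfl) y (rfl | rfl)
    exacts [rfl, hcomm.eq, hcomm.eq.symm, rfl]
  open scoped IsMulCommutative in
  exact sum_Smap_sum_Smap'_of_algHom C.val
    (ℓ := (⟨_, Algebra.subset_adjoin (Set.mem_insert _ _)⟩ : C))
    (ρ := (⟨_, Algebra.subset_adjoin (Set.mem_insert_of_mem _ rfl)⟩ : C)) rfl rfl hq hroot n x
end

section
/- For any associative algebra A over F, a ∈ A, and positive integer i, and for all x, y ∈ A: q^{-i} S_i(x) - q^i S'_i(x) = ((bad a)_i(x)) · a and q^i S_i(y) - q^{-i} S'_i(y) = a · ((bad a)_i(y)). -/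
/-! Writing `L`, `R` for left and right multiplication by `a`, every map here is a polynomial in
the commuting operators `L` and `R`, so `(bad a)_i` is linear and commutes with `L` and `R`.
Moreover `q^{-i} ad_i - q^i ad_{-i} = (q^{2i} - q^{-2i}) R` and
`q^i ad_i - q^{-i} ad_{-i} = (q^{2i} - q^{-2i}) L`; applying `(bad a)_i` and dividing by
`q^{2i} - q^{-2i}`, which is nonzero because `q` is not a root of unity, gives both identities. -/

open Finset

variable {F : Type*} [Field F] {A : Type*} [Ring A] [Algebra F A]

section Linearity

variable (q : F) (a : A)

lemma qad_sub (r : ℤ) (x y : A) : qad q a r (x - y) = qad q a r x - qad q a r y := by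
  simp only [qad, mul_sub, sub_mul, smul_sub]
  abel

lemma qad_mul_right (r : ℤ) (x : A) : qad q a r (x * a) = qad q a r x * a := by
  simp only [qad, sub_mul, smul_mul_assoc, mul_assoc]

lemma qad_mul_left (r : ℤ) (x : A) : qad q a r (a * x) = a * qad q a r x := by
  simp only [qad, mul_sub, mul_smul_comm, mul_assoc]

lemma bad_sub (m : ℕ) (x y : A) : bad q a m (x - y) = bad q a m x - bad q a m y := by
  cases m
  · simp only [bad, qad_sub, smul_sub]
  · simp only [bad, qad_sub, smul_sub]
    module

lemma bad_mul_right (m : ℕ) (x : A) : bad q a m (x * a) = bad q a m x * a := by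
  cases m <;> simp only [bad, qad_mul_right, smul_mul_assoc, add_mul]

lemma bad_mul_left (m : ℕ) (x : A) : bad q a m (a * x) = a * bad q a m x := by
  cases m <;> simp only [bad, qad_mul_left, mul_smul_comm, mul_add]

lemma badProd_sub (m : ℕ) (x y : A) :
    badProd q a m (x - y) = badProd q a m x - badProd q a m y := by
  induction m with
  | zero => rfl
  | succ m ih => simp only [badProd, Function.comp_apply, ih, bad_sub]

lemma badProd_mul_right (m : ℕ) (x : A) : badProd q a m (x * a) = badProd q a m x * a := by
  induction m with
  | zero => rfl
  | succ m ih => simp only [badProd, Function.comp_apply, ih, bad_mul_right]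

lemma badProd_mul_left (m : ℕ) (x : A) : badProd q a m (a * x) = a * badProd q a m x := by
  induction m with
  | zero => rfl
  | succ m ih => simp only [badProd, Function.comp_apply, ih, bad_mul_left]

end Linearity

section Combinations

variable {q : F} (hq : q ≠ 0) (a : A) (r : ℤ) (x : A)
include hq

lemma zpow_neg_smul_qad_sub_zpow_smul_qad_neg :
    q ^ (-r) • qad q a r x - q ^ r • qad q a (-r) x = (q ^ (2 * r) - q ^ (-(2 * r))) • (x * a) := by
  simp only [qad, neg_neg, smul_sub, smul_smul, ← zpow_add₀ hq]
  ring_nf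
  module

lemma zpow_smul_qad_sub_zpow_neg_smul_qad_neg :
    q ^ r • qad q a r x - q ^ (-r) • qad q a (-r) x = (q ^ (2 * r) - q ^ (-(2 * r))) • (a * x) := by
  simp only [qad, neg_neg, smul_sub, smul_smul, ← zpow_add₀ hq]
  ring_nf
  module

end Combinations

lemma zpow_two_mul_sub_zpow_neg_ne_zero {q : F} (hq : q ≠ 0)
    (hroot : ∀ n : ℕ, 0 < n → q ^ n ≠ 1) {n : ℕ} (hn : 0 < n) :
    q ^ (2 * (n : ℤ)) - q ^ (-(2 * (n : ℤ))) ≠ 0 := by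
  intro h
  rw [sub_eq_zero] at h
  apply hroot (4 * n) (by omega)
  calc q ^ (4 * n) = q ^ (2 * (n : ℤ)) * q ^ (2 * (n : ℤ)) := by
        rw [← zpow_add₀ hq, ← zpow_natCast]; push_cast; ring_nf
    _ = q ^ (2 * (n : ℤ)) * q ^ (-(2 * (n : ℤ))) := by nth_rewrite 2 [h]; rfl
    _ = 1 := by rw [← zpow_add₀ hq, add_neg_cancel, zpow_zero]

section Smap

variable (q : F) (a : A) {n : ℕ} (hn : 0 < n) (x : A)
include hn

lemma Smap_of_pos : Smap q a n x =
    (q ^ (2 * (n : ℤ)) - q ^ (-(2 * (n : ℤ))))⁻¹ • badProd q a n (qad q a n x) := by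
  obtain ⟨m, rfl⟩ := Nat.exists_eq_add_one_of_ne_zero hn.ne'
  simp only [Smap, Nat.cast_add, Nat.cast_one]

lemma Smap'_of_pos : Smap' q a n x =
    (q ^ (2 * (n : ℤ)) - q ^ (-(2 * (n : ℤ))))⁻¹ • badProd q a n (qad q a (-n) x) := by
  obtain ⟨m, rfl⟩ := Nat.exists_eq_add_one_of_ne_zero hn.ne'
  simp only [Smap', Nat.cast_add, Nat.cast_one]

lemma smul_Smap_sub_smul_Smap' (s t : F) :
    s • Smap q a n x - t • Smap' q a n x =
      (q ^ (2 * (n : ℤ)) - q ^ (-(2 * (n : ℤ))))⁻¹ •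
        badProd q a n (s • qad q a n x - t • qad q a (-n) x) := by
  rw [Smap_of_pos q a hn, Smap'_of_pos q a hn, badProd_sub, badProd_smul, badProd_smul,
    smul_sub, smul_comm s, smul_comm t]

end Smap

theorem stmt11 (q : F) (hq : q ≠ 0) (hroot : ∀ n : ℕ, 0 < n → q ^ n ≠ 1) (a : A) (i : ℕ) (hi : 0 < i) (x y : A) :
    q ^ (-(i : ℤ)) • Smap q a i x - q ^ (i : ℤ) • Smap' q a i x = badProd q a i x * a ∧
    q ^ (i : ℤ) • Smap q a i y - q ^ (-(i : ℤ)) • Smap' q a i y = a * badProd q a i y := by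
  have hc := zpow_two_mul_sub_zpow_neg_ne_zero hq hroot hi
  constructor
  · rw [smul_Smap_sub_smul_Smap' q a hi, zpow_neg_smul_qad_sub_zpow_smul_qad_neg hq,
      badProd_smul, inv_smul_smul₀ hc, badProd_mul_right]
  · rw [smul_Smap_sub_smul_Smap' q a hi, zpow_smul_qad_sub_zpow_neg_smul_qad_neg hq,
      badProd_smul, inv_smul_smul₀ hc, badProd_mul_left]
end

section
/- Let A be an associative algebra over F and a, x ∈ A. If x satisfies the q-Dolan/Grady relation a³x - [3]_q a²xa + [3]_q axa² - xa³ = (q² - q⁻²)²(xa - ax), then x ∈ A^{(1)}, i.e., (bad a)_2(x) = 0, and consequently for every r ≥ 1, (bad a)_{r+1}(x^r) = 0 (the higher order q-Dolan/Grady relations). -/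
/-!
Let `λ`, `μ` be left and right multiplication by `a`. They commute, and for `m ≥ 1` the map
`bad_m a` is a nonzero multiple of `T_c(λ, μ) = c²(λ² + μ²) - c(c² + 1)λμ + (c² - 1)²` with
`c = q^{2m}`; so `(bad a)_m` is a multiple of `P_m(λ, μ) = (λ - μ) ∏_{k=1}^{m-1} T_{q^{2k}}(λ, μ)`,
and the q-Dolan/Grady relation says exactly `P_2(λ, μ) x = 0`. Writing
`θ_i = b q^{2i} + b⁻¹ q^{-2i}`, `T_{q^{2k}}` vanishes at `(θ_i, θ_j)` when `|i - j| = k`, hence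
`P_{m+1}` vanishes there when `|i - j| ≤ m`.

On a product `y z` three commuting operators act: `λ` on `y`, `μ` on `z`, and `ρ`, right
multiplication on `y` or equivalently left multiplication on `z`. The triangle inequality suggests
that `P_{m+2}(λ, μ)` lies in the ideal generated by `P_{m+1}(λ, ρ)` and `P_2(ρ, μ)`. An explicit
cofactor `U_c(λ, ρ, μ)` with `U_{q²c} T_{q²c}(λ, ρ) ≡ T_{q⁴c}(λ, μ) U_c` modulo `P_2(ρ, μ)` makes
this precise: if `P_2 z = 0`, then `P_{m+2}(y z)` is a nonzero multiple of `U_{q^{2m}}` applied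
to `P_{m+1} y ⊗ z`. Induction on `r` with `y = x^r`, `z = x` gives `P_{r+1}(x^r) = 0`.
-/

open Finset

variable {F : Type*} [Field F] {A : Type*} [Ring A] [Algebra F A]

/-- `T_c(λ, μ) y`, with `λ`, `μ` left and right multiplication by `a`. -/
noncomputable def scaledBad (c : F) (a y : A) : A :=
  c ^ 2 • (a ^ 2 * y + y * a ^ 2) - (c * (c ^ 2 + 1)) • (a * y * a) + (c ^ 2 - 1) ^ 2 • y

/-- `P_m(λ, μ) y`. -/
noncomputable def scaledBadProd (q : F) (a : A) : ℕ → A → A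
  | 0, y => y
  | 1, y => a * y - y * a
  | m + 2, y => scaledBad (q ^ (2 * (m + 1))) a (scaledBadProd q a (m + 1) y)

/-- `U_c(λ, ρ, μ)` applied to `w ⊗ z` and multiplied out: `λ^i ρ^j μ^k` acts as
`w ⊗ z ↦ a^i w a^j z a^k`. -/
noncomputable def productCofactor (q c : F) (a w z : A) : A :=
  (q ^ 4 * (q ^ 4 - 1) ^ 2 * (1 - q ^ 4 * c ^ 2) ^ 2) • (w * z) +
  (q ^ 6 * (1 + q ^ 2) * (1 - q ^ 4 * c ^ 2) * (1 - q ^ 6 * c ^ 2)) • (w * z * a ^ 2) -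
  (q ^ 6 * (1 + q ^ 2) ^ 2 * (1 - q ^ 2 * c ^ 2) * (1 - q ^ 6 * c ^ 2)) • (w * a * z * a) +
  (q ^ 8 * (1 + q ^ 2) * (1 - q ^ 2 * c ^ 2) * (1 - q ^ 4 * c ^ 2)) • (w * a ^ 2 * z) +
  (q ^ 6 * c * (1 + q ^ 2) * (q ^ 4 - 1) * (1 - q ^ 6 * c ^ 2)) • (a * w * z * a) -
  (q ^ 8 * c * (1 + q ^ 2) * (q ^ 4 - 1) * (1 - q ^ 2 * c ^ 2)) • (a * w * a * z) +
  (q ^ 8 * c ^ 2 * (q ^ 4 - 1) ^ 2) • (a ^ 2 * w * z)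

section

variable {q : F} {a : A}

lemma scaledBad_smul (c s : F) (y : A) : scaledBad c a (s • y) = s • scaledBad c a y := by
  simp only [scaledBad, smul_add, smul_sub, smul_smul, mul_smul_comm, smul_mul_assoc]
  match_scalars <;> ring

lemma productCofactor_zero_left (c : F) (z : A) : productCofactor q c a 0 z = 0 := by
  simp [productCofactor]

lemma qad_qad_neg (hq : q ≠ 0) (r : ℤ) (w : A) :
    qad q a r (qad q a (-r) w) =
      a ^ 2 * w + w * a ^ 2 - (q ^ (2 * r) + q ^ (-(2 * r))) • (a * w * a) := by
  simp only [qad, neg_neg, mul_sub, sub_mul, smul_sub, mul_smul_comm, smul_mul_assoc, smul_smul,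
    ← zpow_add₀ hq, mul_assoc, pow_two]
  rw [add_neg_cancel, neg_add_cancel, zpow_zero, ← two_mul, ← neg_add, ← two_mul, add_smul]
  simp only [one_smul]
  abel

lemma bad_succ_eq_smul_scaledBad (hq : q ≠ 0) (m : ℕ) :
    ∃ s : F, ∀ w : A, bad q a (m + 1) w = s • scaledBad (q ^ (2 * (m + 1))) a w := by
  set c := q ^ (2 * (m + 1))
  have hc0 : c ≠ 0 := pow_ne_zero _ hq
  have hc : q ^ (2 * ((m : ℤ) + 1)) = c := by norm_cast
  refine ⟨((c - c⁻¹) * (q ^ (2 * ((m : ℤ) + 1) + 1) - q ^ (-(2 * ((m : ℤ) + 1)) - 1)))⁻¹ *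
    (c ^ 2)⁻¹, fun w => ?_⟩
  rw [bad, qad_qad_neg hq, zpow_neg, hc]
  simp only [scaledBad, smul_add, smul_sub, smul_smul]
  match_scalars <;> field_simp

lemma badProd_eq_smul_scaledBadProd (hq : q ≠ 0) :
    ∀ m : ℕ, ∃ s : F, ∀ y : A, badProd q a m y = s • scaledBadProd q a m y
  | 0 => ⟨1, fun y => (one_smul F y).symm⟩
  | 1 => ⟨(q - q⁻¹)⁻¹, fun y => by simp [badProd, bad, qad, scaledBadProd]⟩
  | m + 2 => by
    obtain ⟨s, hs⟩ := badProd_eq_smul_scaledBadProd hq (m + 1)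
    obtain ⟨t, ht⟩ := bad_succ_eq_smul_scaledBad (a := a) hq m
    refine ⟨t * s, fun y => ?_⟩
    rw [badProd, Function.comp_apply, hs, ht, scaledBad_smul, smul_smul]
    rfl

lemma badProd_eq_zero_of_scaledBadProd_eq_zero (hq : q ≠ 0) {m : ℕ} {y : A}
    (hy : scaledBadProd q a m y = 0) : badProd q a m y = 0 := by
  obtain ⟨s, hs⟩ := badProd_eq_smul_scaledBadProd (a := a) hq m
  rw [hs, hy, smul_zero]

lemma smul_scaledBadProd_two_mul (y : A) {z : A} (hz : scaledBadProd q a 2 z = 0) :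
    (q ^ 4 * (q ^ 4 - 1) ^ 2) • scaledBadProd q a 2 (y * z) =
      productCofactor q 1 a (a * y - y * a) z := by
  linear_combination (norm := skip) (q ^ 4 * (q ^ 4 - 1) ^ 2) • (y * hz)
  simp only [scaledBadProd, scaledBad, productCofactor, mul_add, add_mul, mul_sub, sub_mul,
    smul_add, smul_sub, smul_smul, mul_smul_comm, pow_two, mul_assoc, mul_zero, smul_zero]
  match_scalars <;> ring

set_option maxHeartbeats 1000000 in
lemma productCofactor_scaledBad (c : F) (w : A) {z : A} (hz : scaledBadProd q a 2 z = 0) :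
    productCofactor q (q ^ 2 * c) a (scaledBad (q ^ 2 * c) a w) z =
      scaledBad (q ^ 4 * c) a (productCofactor q c a w z) := by
  linear_combination (norm := skip)
    -(q ^ 6 * c * (1 + q ^ 2) * (1 - q ^ 6 * c ^ 2) ^ 2 * (1 + q ^ 6 * c ^ 2)) • (a * w * hz) +
    (q ^ 8 * c ^ 2 * (1 + q ^ 2) * (1 - q ^ 6 * c ^ 2) * (1 - q ^ 8 * c ^ 2)) • (w * a * hz) +
    (q ^ 10 * c ^ 2 * (1 + q ^ 2) * (1 - q ^ 4 * c ^ 2) * (1 - q ^ 6 * c ^ 2)) • (w * hz * a)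
  simp only [scaledBadProd, scaledBad, productCofactor, mul_add, add_mul, mul_sub, sub_mul,
    smul_add, smul_sub, smul_smul, smul_mul_assoc, mul_smul_comm, pow_two, mul_assoc, mul_zero,
    zero_mul, smul_zero, add_zero]
  match_scalars <;> ring

lemma smul_scaledBadProd_mul {z : A} (hz : scaledBadProd q a 2 z = 0) (m : ℕ) (y : A) :
    (q ^ 4 * (q ^ 4 - 1) ^ 2) • scaledBadProd q a (m + 2) (y * z) =
      productCofactor q (q ^ (2 * m)) a (scaledBadProd q a (m + 1) y) z := by
  induction m with
  | zero =>
    rw [mul_zero, pow_zero]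
    exact smul_scaledBadProd_two_mul y hz
  | succ m ih =>
    have h2 : q ^ 2 * q ^ (2 * m) = q ^ (2 * (m + 1)) := by ring
    have h4 : q ^ 4 * q ^ (2 * m) = q ^ (2 * (m + 2)) := by ring
    change _ • scaledBad _ a _ = productCofactor q _ a (scaledBad _ a _) z
    rw [← scaledBad_smul, ih, ← h2, ← h4]
    exact (productCofactor_scaledBad _ _ hz).symm

lemma scaledBadProd_pow_eq_zero (hq : q ≠ 0) (hq4 : q ^ 4 ≠ 1) {x : A}
    (hx : scaledBadProd q a 2 x = 0) {r : ℕ} (hr : 1 ≤ r) :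
    scaledBadProd q a (r + 1) (x ^ r) = 0 := by
  induction r, hr using Nat.le_induction with
  | base => simpa using hx
  | succ r _ ih =>
    have h := smul_scaledBadProd_mul hx r (x ^ r)
    rw [ih, productCofactor_zero_left, ← pow_succ] at h
    refine (smul_eq_zero.mp h).resolve_left ?_
    exact mul_ne_zero (pow_ne_zero 4 hq) (pow_ne_zero 2 (sub_ne_zero.mpr hq4))

lemma scaledBadProd_two_eq_zero_of_dolanGrady (hq : q ≠ 0) (hq2 : q ^ 2 ≠ 1) {x : A}
    (hdg : a ^ 3 * x - ((q ^ (3 : ℤ) - q ^ (-3 : ℤ)) / (q - q⁻¹)) • (a ^ 2 * x * a) +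
        ((q ^ (3 : ℤ) - q ^ (-3 : ℤ)) / (q - q⁻¹)) • (a * x * a ^ 2) - x * a ^ 3 =
      ((q ^ (2 : ℤ) - q ^ (-2 : ℤ)) ^ 2) • (x * a - a * x)) :
    scaledBadProd q a 2 x = 0 := by
  have hqq : q - q⁻¹ ≠ 0 := by
    rw [sub_ne_zero]
    intro h
    exact hq2 (by field_simp at h; linear_combination h)
  linear_combination (norm := skip) q ^ 4 • hdg
  simp only [scaledBadProd, scaledBad, zpow_neg, zpow_ofNat, mul_add, mul_sub, sub_mul, smul_add,
    smul_sub, smul_smul, pow_succ, pow_zero, one_mul, mul_assoc]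
  match_scalars <;> field_simp <;> ring

end

theorem stmt13 (q : F) (hq : q ≠ 0) (hroot : ∀ n : ℕ, 0 < n → q ^ n ≠ 1) (a : A) (x : A)
    (hdg : a ^ 3 * x - ((q ^ (3 : ℤ) - q ^ (-3 : ℤ)) / (q - q⁻¹)) • (a ^ 2 * x * a) +
        ((q ^ (3 : ℤ) - q ^ (-3 : ℤ)) / (q - q⁻¹)) • (a * x * a ^ 2) - x * a ^ 3 =
      ((q ^ (2 : ℤ) - q ^ (-2 : ℤ)) ^ 2) • (x * a - a * x)) :
    badProd q a 2 x = 0 ∧ ∀ r : ℕ, 1 ≤ r → badProd q a (r + 1) (x ^ r) = 0 := by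
  have hx : scaledBadProd q a 2 x = 0 :=
    scaledBadProd_two_eq_zero_of_dolanGrady hq (hroot 2 two_pos) hdg
  exact ⟨badProd_eq_zero_of_scaledBadProd_eq_zero hq hx, fun r hr =>
    badProd_eq_zero_of_scaledBadProd_eq_zero hq
      (scaledBadProd_pow_eq_zero hq (hroot 4 four_pos) hx hr)⟩
end

section
/- Let θ_0, …, θ_d be d+1 mutually distinct elements of F (d ≥ 1) such that θ_i² - (q² + q⁻²)θ_i θ_j + θ_j² + (q² - q⁻²)² = 0 whenever |i - j| = 1. Then there exists a nonzero a ∈ F with θ_i = a q^{d-2i} + a⁻¹ q^{2i-d} for 0 ≤ i ≤ d. -/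
/-! With `s = q²`, adjacent eigenvalues satisfy `QAdjacent s θ_i θ_{i+1}`. For `x = a + a⁻¹` this
quadratic in `y` factors as `(y - (a s⁻¹ + (a s⁻¹)⁻¹)) (y - (a s + (a s)⁻¹))`, so each step from
`θ_i = a + a⁻¹` multiplies `a` by `s⁻¹` or by `s`; the factor `s` would return to `θ_{i-1}`,
which distinctness forbids. Hence `θ_i = b s⁻ⁱ + (b s⁻ⁱ)⁻¹`, where `b` is read off from `θ_0, θ_1`,
and `a = b q⁻ᵈ`. -/

open Finset

variable {F : Type*} [Field F] {A : Type*} [Ring A] [Algebra F A]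

def QAdjacent (s x y : F) : Prop :=
  x ^ 2 - (s + s⁻¹) * x * y + y ^ 2 + (s - s⁻¹) ^ 2 = 0

lemma QAdjacent.eq_or_eq_of_add_inv {s a y : F} (hs : s ≠ 0) (ha : a ≠ 0)
    (h : QAdjacent s (a + a⁻¹) y) :
    y = a * s⁻¹ + (a * s⁻¹)⁻¹ ∨ y = a * s + (a * s)⁻¹ := by
  have hfactor : (y - (a * s⁻¹ + (a * s⁻¹)⁻¹)) * (y - (a * s + (a * s)⁻¹)) = 0 := by
    rw [QAdjacent] at h
    rw [← h]
    field_simp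
    ring
  rcases mul_eq_zero.mp hfactor with h | h
  exacts [.inl (sub_eq_zero.mp h), .inr (sub_eq_zero.mp h)]

lemma QAdjacent.exists_eq_add_inv {s x y : F} (hs : s ≠ 0) (hs1 : s ^ 2 ≠ 1)
    (h : QAdjacent s x y) :
    ∃ b ≠ 0, x = b + b⁻¹ ∧ y = b * s⁻¹ + (b * s⁻¹)⁻¹ := by
  have hs1' : s ^ 2 - 1 ≠ 0 := sub_ne_zero.mpr hs1
  have hmul : (s * x - y) / (s - s⁻¹) * ((y - s⁻¹ * x) / (s - s⁻¹)) = 1 := by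
    rw [QAdjacent] at h
    field_simp at h ⊢
    linear_combination (-1) * h
  refine ⟨_, left_ne_zero_of_mul_eq_one hmul, ?_, ?_⟩
  · rw [inv_eq_of_mul_eq_one_right hmul]
    field_simp
    ring
  · rw [mul_inv, inv_eq_of_mul_eq_one_right hmul, inv_inv]
    field_simp
    ring

lemma eq_mul_zpow_add_inv_of_qAdjacent {s b : F} (hs : s ≠ 0) (hb : b ≠ 0) {n : ℕ}
    {θ : ℕ → F} (hinj : ∀ i ≤ n, ∀ j ≤ n, θ i = θ j → i = j)
    (hadj : ∀ i, i + 1 ≤ n → QAdjacent s (θ i) (θ (i + 1)))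
    (h0 : θ 0 = b + b⁻¹) (h1 : θ 1 = b * s⁻¹ + (b * s⁻¹)⁻¹) :
    ∀ i ≤ n, θ i = b * s ^ (-(i : ℤ)) + (b * s ^ (-(i : ℤ)))⁻¹ := by
  set c : ℕ → F := fun i => b * s ^ (-(i : ℤ))
  have hc_succ (i : ℕ) : c (i + 1) = c i * s⁻¹ := by
    simp only [c]
    rw [Nat.cast_succ, neg_add, zpow_add₀ hs, zpow_neg_one, mul_assoc]
  have hc_ne (i : ℕ) : c i ≠ 0 := mul_ne_zero hb (zpow_ne_zero _ hs)
  have hpair : ∀ i, i + 1 ≤ n →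
      θ i = c i + (c i)⁻¹ ∧ θ (i + 1) = c (i + 1) + (c (i + 1))⁻¹ := by
    intro i
    induction i with
    | zero =>
      intro _
      simp only [c, Nat.cast_zero, neg_zero, zpow_zero, mul_one, zero_add, Nat.cast_one,
        zpow_neg_one]
      exact ⟨h0, h1⟩
    | succ i ih =>
      intro hi
      obtain ⟨hprev, hcur⟩ := ih (by omega)
      refine ⟨hcur, ?_⟩
      have hstep := hadj (i + 1) hi
      rw [hcur] at hstep
      rcases hstep.eq_or_eq_of_add_inv hs (hc_ne _) with hnext | hback
      · rwa [hc_succ (i + 1)]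
      · rw [hc_succ i, mul_assoc, inv_mul_cancel₀ hs, mul_one, ← hprev] at hback
        exact absurd (hinj _ hi _ (by omega) hback) (by omega)
  intro i hi
  rcases i with _ | i
  · simpa using h0
  · exact (hpair i hi).2

theorem stmt15 (q : F) (hq : q ≠ 0) (hroot : ∀ n : ℕ, 0 < n → q ^ n ≠ 1) (d : ℕ) (hd : 1 ≤ d) (θ : ℕ → F)
    (hdist : ∀ i ≤ d, ∀ j ≤ d, θ i = θ j → i = j)
    (hrec : ∀ i ≤ d, ∀ j ≤ d, (i + 1 = j ∨ j + 1 = i) →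
      θ i ^ 2 - (q ^ (2 : ℤ) + q ^ (-2 : ℤ)) * θ i * θ j + θ j ^ 2 +
        (q ^ (2 : ℤ) - q ^ (-2 : ℤ)) ^ 2 = 0) :
    ∃ a : F, a ≠ 0 ∧ ∀ i ≤ d, θ i = a * q ^ ((d : ℤ) - 2 * i) + a⁻¹ * q ^ (2 * (i : ℤ) - d) := by
  set s : F := q ^ (2 : ℤ)
  have hs : s ≠ 0 := zpow_ne_zero _ hq
  have hs1 : s ^ 2 ≠ 1 := by
    have h4 : s ^ 2 = q ^ 4 := by
      rw [← zpow_natCast, ← zpow_mul]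
      norm_num
    exact h4 ▸ hroot 4 (by norm_num)
  have hadj (i : ℕ) (hi : i + 1 ≤ d) : QAdjacent s (θ i) (θ (i + 1)) := by
    simpa only [QAdjacent, s, ← zpow_neg] using hrec i (by omega) (i + 1) hi (.inl rfl)
  obtain ⟨b, hb, h0, h1⟩ := (hadj 0 hd).exists_eq_add_inv hs hs1
  have hθ := eq_mul_zpow_add_inv_of_qAdjacent hs hb hdist hadj h0 h1
  refine ⟨b * q ^ (-(d : ℤ)), mul_ne_zero hb (zpow_ne_zero _ hq), fun i hi => ?_⟩
  have hshift : b * s ^ (-(i : ℤ)) = b * q ^ (-(d : ℤ)) * q ^ ((d : ℤ) - 2 * i) := by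
    rw [mul_assoc, ← zpow_add₀ hq, ← zpow_mul]
    ring_nf
  rw [hθ i hi, hshift, mul_inv (_ * _), ← zpow_neg, neg_sub]
end

section
/- Fix a nonzero a ∈ F, d ∈ ℕ, and set θ_i = a q^{d-2i} + a⁻¹ q^{2i-d} and t_i = a^{2i} q^{2i(d-i)} for 0 ≤ i ≤ d. Then for 0 ≤ i, j ≤ d with |i - j| ≤ 1: t_j/t_i = 1 + (q θ_i² - (q + q⁻¹)θ_i θ_j + q⁻¹ θ_j²)/((q - q⁻¹)(q² - q⁻²)) and t_i/t_j = 1 + (q⁻¹ θ_i² - (q + q⁻¹)θ_i θ_j + q θ_j²)/((q - q⁻¹)(q² - q⁻²)). -/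
open Finset

variable {F : Type*} [Field F] {A : Type*} [Ring A] [Algebra F A]

/-! Put `u_i = a q^(d-2i)`. Then `θ_i = u_i + u_i⁻¹`, `θ_(i+1) = u_i/q² + q²/u_i` and
`t_(i+1)/t_i = u_i²/q²`, so the step from `i` to `i + 1` is one rational identity in `u = u_i`.
Replacing `u` by `q²/u` exchanges `θ_i` and `θ_(i+1)` and inverts the ratio, so the same identity
gives the step from `i + 1` to `i`; and the second formula is the first with `i` and `j` exchanged. -/

lemma sub_inv_mul_zpow_sub_ne_zero {q : F} (hq : q ≠ 0) (h4 : q ^ 4 ≠ 1) :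
    (q - q⁻¹) * (q ^ (2 : ℤ) - q ^ (-2 : ℤ)) ≠ 0 := by
  have h2 : q ^ 2 ≠ 1 := fun h => h4 (by rw [show 4 = 2 * 2 from rfl, pow_mul, h, one_pow])
  have e : (q - q⁻¹) * (q ^ (2 : ℤ) - q ^ (-2 : ℤ)) = (q ^ 2 - 1) * (q ^ 4 - 1) / q ^ 3 := by
    field_simp
  rw [e]
  exact div_ne_zero (mul_ne_zero (sub_ne_zero.2 h2) (sub_ne_zero.2 h4)) (pow_ne_zero _ hq)

lemma sq_div_sq_eq_one_add {q u : F} (hq : q ≠ 0) (hu : u ≠ 0)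
    (hD : (q - q⁻¹) * (q ^ (2 : ℤ) - q ^ (-2 : ℤ)) ≠ 0) :
    u ^ 2 / q ^ 2 = 1 + (q * (u + u⁻¹) ^ 2 - (q + q⁻¹) * (u + u⁻¹) * (u / q ^ 2 + q ^ 2 / u)
      + q⁻¹ * (u / q ^ 2 + q ^ 2 / u) ^ 2) / ((q - q⁻¹) * (q ^ (2 : ℤ) - q ^ (-2 : ℤ))) := by
  rw [← sub_eq_iff_eq_add', eq_div_iff hD]
  field_simp
  ring

section Sequences

variable {q a : F} {d : ℕ} {θ t : ℕ → F}

lemma theta_eq_add_inv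
    (hθ : ∀ i, θ i = a * q ^ ((d : ℤ) - 2 * i) + a⁻¹ * q ^ (2 * (i : ℤ) - d)) (i : ℕ) :
    θ i = a * q ^ ((d : ℤ) - 2 * i) + (a * q ^ ((d : ℤ) - 2 * i))⁻¹ := by
  rw [hθ, mul_inv, ← zpow_neg, neg_sub]

lemma theta_succ_eq
    (hθ : ∀ i, θ i = a * q ^ ((d : ℤ) - 2 * i) + a⁻¹ * q ^ (2 * (i : ℤ) - d)) (hq : q ≠ 0) (i : ℕ) :
    θ (i + 1) = a * q ^ ((d : ℤ) - 2 * i) / q ^ 2 + q ^ 2 / (a * q ^ ((d : ℤ) - 2 * i)) := by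
  rw [hθ]
  push_cast
  rw [show (d : ℤ) - 2 * (i + 1) = (d - 2 * i) - 2 by ring,
    show 2 * ((i : ℤ) + 1) - d = -(d - 2 * i) + 2 by ring, zpow_sub₀ hq, zpow_add₀ hq, zpow_neg]
  field_simp

lemma t_succ_div
    (ht : ∀ i, t i = a ^ (2 * (i : ℤ)) * q ^ (2 * (i : ℤ) * ((d : ℤ) - i))) (ha : a ≠ 0) (hq : q ≠ 0) (i : ℕ) :
    t (i + 1) / t i = (a * q ^ ((d : ℤ) - 2 * i)) ^ 2 / q ^ 2 := by
  rw [ht, ht, mul_div_mul_comm, ← zpow_sub₀ ha, ← zpow_sub₀ hq]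
  push_cast
  rw [show 2 * ((i : ℤ) + 1) - 2 * i = 2 by ring,
    show 2 * ((i : ℤ) + 1) * (d - (i + 1)) - 2 * i * (d - i) = 2 * (d - 2 * i) - 2 by ring,
    zpow_sub₀ hq, zpow_mul']
  field_simp

lemma div_eq_one_add_of_natAbs_sub_le_one
    (hθ : ∀ i, θ i = a * q ^ ((d : ℤ) - 2 * i) + a⁻¹ * q ^ (2 * (i : ℤ) - d))
    (ht : ∀ i, t i = a ^ (2 * (i : ℤ)) * q ^ (2 * (i : ℤ) * ((d : ℤ) - i)))
    (hq : q ≠ 0) (ha : a ≠ 0) (hD : (q - q⁻¹) * (q ^ (2 : ℤ) - q ^ (-2 : ℤ)) ≠ 0)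
    {i j : ℕ} (hij : ((i : ℤ) - j).natAbs ≤ 1) :
    t j / t i = 1 + (q * θ i ^ 2 - (q + q⁻¹) * θ i * θ j + q⁻¹ * θ j ^ 2) /
      ((q - q⁻¹) * (q ^ (2 : ℤ) - q ^ (-2 : ℤ))) := by
  have hu : ∀ k : ℕ, a * q ^ ((d : ℤ) - 2 * k) ≠ 0 := fun k => mul_ne_zero ha (zpow_ne_zero _ hq)
  obtain rfl | rfl | rfl : j = i ∨ j = i + 1 ∨ i = j + 1 := by omega
  · have ht0 : t j ≠ 0 := by rw [ht]; exact mul_ne_zero (zpow_ne_zero _ ha) (zpow_ne_zero _ hq)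
    rw [div_self ht0]
    ring
  · rw [t_succ_div ht ha hq, theta_succ_eq hθ hq, theta_eq_add_inv hθ]
    exact sq_div_sq_eq_one_add hq (hu i) hD
  · set u := a * q ^ ((d : ℤ) - 2 * j) with hu_def
    have hu0 : u ≠ 0 := hu j
    have hq2 : q ^ 2 ≠ 0 := pow_ne_zero _ hq
    have hup : t j / t (j + 1) = (q ^ 2 / u) ^ 2 / q ^ 2 := by
      rw [← inv_div, t_succ_div ht ha hq, ← hu_def]
      field_simp
    have hθj : θ j = q ^ 2 / u / q ^ 2 + q ^ 2 / (q ^ 2 / u) := by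
      rw [theta_eq_add_inv hθ, ← hu_def]
      field_simp
      ring
    have hθj1 : θ (j + 1) = q ^ 2 / u + (q ^ 2 / u)⁻¹ := by
      rw [theta_succ_eq hθ hq, inv_div, add_comm]
    rw [hup, hθj, hθj1]
    exact sq_div_sq_eq_one_add hq (div_ne_zero hq2 hu0) hD

end Sequences

theorem stmt16_general (q : F) (hq : q ≠ 0) (hroot : ∀ n : ℕ, 0 < n → q ^ n ≠ 1) (a : F) (ha : a ≠ 0) (d : ℕ)
    (θ t : ℕ → F)
    (hθ : ∀ i, θ i = a * q ^ ((d : ℤ) - 2 * i) + a⁻¹ * q ^ (2 * (i : ℤ) - d))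
    (ht : ∀ i, t i = a ^ (2 * (i : ℤ)) * q ^ (2 * (i : ℤ) * ((d : ℤ) - i)))
    (i j : ℕ) (hij : ((i : ℤ) - j).natAbs ≤ 1) :
    t j / t i = 1 + (q * θ i ^ 2 - (q + q⁻¹) * θ i * θ j + q⁻¹ * θ j ^ 2) /
        ((q - q⁻¹) * (q ^ (2 : ℤ) - q ^ (-2 : ℤ))) ∧
    t i / t j = 1 + (q⁻¹ * θ i ^ 2 - (q + q⁻¹) * θ i * θ j + q * θ j ^ 2) /
        ((q - q⁻¹) * (q ^ (2 : ℤ) - q ^ (-2 : ℤ))) := by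
  have hD := sub_inv_mul_zpow_sub_ne_zero hq (hroot 4 (by norm_num))
  refine ⟨div_eq_one_add_of_natAbs_sub_le_one hθ ht hq ha hD hij, ?_⟩
  rw [div_eq_one_add_of_natAbs_sub_le_one hθ ht hq ha hD (j := i) (i := j) (by omega)]
  ring

theorem stmt16 (q : F) (hq : q ≠ 0) (hroot : ∀ n : ℕ, 0 < n → q ^ n ≠ 1) (a : F) (ha : a ≠ 0) (d : ℕ)
    (θ t : ℕ → F)
    (hθ : ∀ i, θ i = a * q ^ ((d : ℤ) - 2 * i) + a⁻¹ * q ^ (2 * (i : ℤ) - d))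
    (ht : ∀ i, t i = a ^ (2 * (i : ℤ)) * q ^ (2 * (i : ℤ) * ((d : ℤ) - i)))
    (i j : ℕ) (hi : i ≤ d) (hj : j ≤ d) (hij : ((i : ℤ) - j).natAbs ≤ 1) :
    t j / t i = 1 + (q * θ i ^ 2 - (q + q⁻¹) * θ i * θ j + q⁻¹ * θ j ^ 2) /
        ((q - q⁻¹) * (q ^ (2 : ℤ) - q ^ (-2 : ℤ))) ∧
    t i / t j = 1 + (q⁻¹ * θ i ^ 2 - (q + q⁻¹) * θ i * θ j + q * θ j ^ 2) /
        ((q - q⁻¹) * (q ^ (2 : ℤ) - q ^ (-2 : ℤ))) :=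
  stmt16_general q hq hroot a ha d θ t hθ ht i j hij
end

section
/- Fix a nonzero a ∈ F, d ∈ ℕ, and set θ_i = a q^{d-2i} + a⁻¹ q^{2i-d} for 0 ≤ i ≤ d. Then for 0 ≤ i, j ≤ d and every natural number n > |i - j|, the scalar ((θ_i - θ_j)/(q - q⁻¹)) · ∏_{r=1}^{n-1} (((q^{2r} - q^{-2r})² + (q^r θ_i - q^{-r} θ_j)(q^{-r} θ_i - q^r θ_j)) / ((q^{2r} - q^{-2r})(q^{2r+1} - q^{-2r-1}))) equals zero. -/
/-!
The factor with `r = |i - j|` vanishes. Writing `θ_k = u_k + u_k⁻¹` with `u_k = a q^{d-2k}`, one has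
`u_j = u_i t²` for `t = q^{i-j}`, and for such a pair the numerator
`(t² - t⁻²)² + (t θ_i - t⁻¹ θ_j)(t⁻¹ θ_i - t θ_j)` is identically zero; it is invariant under
`t ↦ t⁻¹`, so the sign of `i - j` does not matter. When `i = j` the prefactor `θ_i - θ_j` vanishes.
-/

open Finset

variable {F : Type*} [Field F] {A : Type*} [Ring A] [Algebra F A]

/-- With `t = q ^ r`: the numerator of the scalar by which `bad q a r` acts on an `x` with
`a * x = θ • x` and `x * a = θ' • x`. -/
def balancedNumerator (t θ θ' : F) : F :=
  (t ^ 2 - t⁻¹ ^ 2) ^ 2 + (t * θ - t⁻¹ * θ') * (t⁻¹ * θ - t * θ')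

theorem balancedNumerator_inv (t θ θ' : F) :
    balancedNumerator t⁻¹ θ θ' = balancedNumerator t θ θ' := by
  unfold balancedNumerator
  rw [inv_inv]
  ring

theorem balancedNumerator_add_inv_eq_zero {t u : F} (ht : t ≠ 0) (hu : u ≠ 0) :
    balancedNumerator t (u + u⁻¹) (u * t ^ 2 + (u * t ^ 2)⁻¹) = 0 := by
  unfold balancedNumerator
  field_simp
  ring

theorem balancedNumerator_zpow_natAbs (q θ θ' : F) (r : ℤ) :
    balancedNumerator (q ^ (r.natAbs : ℤ)) θ θ' = balancedNumerator (q ^ r) θ θ' := by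
  rw [Int.natCast_natAbs]
  rcases abs_choice r with h | h <;> simp only [h, zpow_neg, balancedNumerator_inv]

theorem zpow_numerator_eq_balancedNumerator (q θ θ' : F) (r : ℤ) :
    (q ^ (2 * r) - q ^ (-(2 * r))) ^ 2 +
        (q ^ r * θ - q ^ (-r) * θ') * (q ^ (-r) * θ - q ^ r * θ') =
      balancedNumerator (q ^ r) θ θ' := by
  have hsq : q ^ (2 * r) = (q ^ r) ^ 2 := by rw [mul_comm, zpow_mul, zpow_two, sq]
  rw [balancedNumerator, zpow_neg, zpow_neg, hsq, inv_pow]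

theorem stmt17_general (q : F) (hq : q ≠ 0) (a : F) (ha : a ≠ 0) (d : ℕ)
    (θ : ℕ → F)
    (hθ : ∀ i, θ i = a * q ^ ((d : ℤ) - 2 * i) + a⁻¹ * q ^ (2 * (i : ℤ) - d))
    (i j : ℕ) (n : ℕ) (hn : ((i : ℤ) - j).natAbs < n) :
    (θ i - θ j) / (q - q⁻¹) *
      (∏ r ∈ Finset.Icc 1 (n - 1),
        ((q ^ (2 * (r : ℤ)) - q ^ (-(2 * (r : ℤ)))) ^ 2 +
            (q ^ (r : ℤ) * θ i - q ^ (-(r : ℤ)) * θ j) * (q ^ (-(r : ℤ)) * θ i - q ^ (r : ℤ) * θ j)) /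
          ((q ^ (2 * (r : ℤ)) - q ^ (-(2 * (r : ℤ)))) * (q ^ (2 * (r : ℤ) + 1) - q ^ (-(2 * (r : ℤ)) - 1)))) = 0 := by
  rcases eq_or_ne i j with rfl | hij
  · simp
  have hθ_add_inv (k : ℕ) : θ k = a * q ^ ((d : ℤ) - 2 * k) + (a * q ^ ((d : ℤ) - 2 * k))⁻¹ := by
    rw [hθ, mul_inv, ← zpow_neg, neg_sub]
  have hpow : q ^ ((d : ℤ) - 2 * j) = q ^ ((d : ℤ) - 2 * i) * (q ^ ((i : ℤ) - j)) ^ 2 := by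
    rw [← zpow_natCast, ← zpow_mul, ← zpow_add₀ hq]
    congr 1
    ring
  refine mul_eq_zero_of_right _ (prod_eq_zero (i := ((i : ℤ) - j).natAbs) (by rw [mem_Icc]; omega) ?_)
  rw [zpow_numerator_eq_balancedNumerator, balancedNumerator_zpow_natAbs, hθ_add_inv i,
    hθ_add_inv j, hpow, ← mul_assoc,
    balancedNumerator_add_inv_eq_zero (zpow_ne_zero _ hq) (mul_ne_zero ha (zpow_ne_zero _ hq)),
    zero_div]

theorem stmt17 (q : F) (hq : q ≠ 0) (hroot : ∀ n : ℕ, 0 < n → q ^ n ≠ 1) (a : F) (ha : a ≠ 0) (d : ℕ)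
    (θ : ℕ → F)
    (hθ : ∀ i, θ i = a * q ^ ((d : ℤ) - 2 * i) + a⁻¹ * q ^ (2 * (i : ℤ) - d))
    (i j : ℕ) (hi : i ≤ d) (hj : j ≤ d) (n : ℕ) (hn : ((i : ℤ) - j).natAbs < n) :
    (θ i - θ j) / (q - q⁻¹) *
      (∏ r ∈ Finset.Icc 1 (n - 1),
        ((q ^ (2 * (r : ℤ)) - q ^ (-(2 * (r : ℤ)))) ^ 2 +
            (q ^ (r : ℤ) * θ i - q ^ (-(r : ℤ)) * θ j) * (q ^ (-(r : ℤ)) * θ i - q ^ (r : ℤ) * θ j)) /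
          ((q ^ (2 * (r : ℤ)) - q ^ (-(2 * (r : ℤ)))) * (q ^ (2 * (r : ℤ) + 1) - q ^ (-(2 * (r : ℤ)) - 1)))) = 0 :=
  stmt17_general q hq a ha d θ hθ i j n hn
end

section
/- Let A be an associative algebra over F, a ∈ A, and let x ∈ A commute with a. Then for every n ∈ ℕ, S_n(x) = 0 for n ≥ 1 and S'_n(x) = 0 for n ≥ 1; in particular the maps S = ∑_n S_n and S' = ∑_n S'_n fix x. -/
open Finset

variable {F : Type*} [Field F] {A : Type*} [Ring A] [Algebra F A]

/-! For `x` commuting with `a`, `ad_r a x = (q^r - q^{-r}) a x` again commutes with `a`, and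
`bad_0 a` annihilates everything commuting with `a`. Since every `bad_m a` fixes `0`, each
`(bad a)_m`, `m ≥ 1`, kills `ad_{±m} a x`, so `S_m x = S'_m x = 0` for `m ≥ 1`, while `S_0 = id`. -/

section CommutingElement

variable (q : F) {a y : A}

lemma qad_of_commute (h : Commute a y) (r : ℤ) :
    qad q a r y = (q ^ r - q ^ (-r)) • (a * y) := by
  rw [qad, h.eq, sub_smul]

lemma commute_qad_of_commute (h : Commute a y) (r : ℤ) : Commute a (qad q a r y) := by
  rw [qad_of_commute q h]
  exact ((Commute.refl a).mul_right h).smul_right _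

lemma bad_apply_zero (a : A) (m : ℕ) : bad q a m 0 = 0 := by
  cases m <;> simp [bad, qad]

lemma bad_zero_of_commute (h : Commute a y) : bad q a 0 y = 0 := by
  simp [bad, qad, h.eq]

lemma badProd_succ_of_commute (h : Commute a y) (m : ℕ) : badProd q a (m + 1) y = 0 := by
  induction m with
  | zero => exact bad_zero_of_commute q h
  | succ m ih =>
    change bad q a (m + 1) (badProd q a (m + 1) y) = 0
    rw [ih, bad_apply_zero]

lemma Smap_succ_of_commute (h : Commute a y) (m : ℕ) : Smap q a (m + 1) y = 0 := by
  simp only [Smap, badProd_succ_of_commute q (commute_qad_of_commute q h _), smul_zero]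

lemma Smap'_succ_of_commute (h : Commute a y) (m : ℕ) : Smap' q a (m + 1) y = 0 := by
  simp only [Smap', badProd_succ_of_commute q (commute_qad_of_commute q h _), smul_zero]

end CommutingElement

theorem stmt19_general (q : F) (a : A) (x : A) (hx : a * x = x * a) :
    (∀ n : ℕ, 1 ≤ n → Smap q a n x = 0 ∧ Smap' q a n x = 0) ∧
    (∀ N : ℕ, ∑ n ∈ Finset.range (N + 1), Smap q a n x = x ∧
      ∑ n ∈ Finset.range (N + 1), Smap' q a n x = x) := by
  have hS (m : ℕ) := Smap_succ_of_commute q hx m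
  have hS' (m : ℕ) := Smap'_succ_of_commute q hx m
  refine ⟨fun n hn => ?_, fun N => ⟨?_, ?_⟩⟩
  · obtain ⟨m, rfl⟩ := Nat.exists_eq_add_of_le' hn
    exact ⟨hS m, hS' m⟩
  · rw [sum_range_succ', sum_eq_zero fun m _ => hS m, zero_add]
    rfl
  · rw [sum_range_succ', sum_eq_zero fun m _ => hS' m, zero_add]
    rfl

theorem stmt19 (q : F) (hq : q ≠ 0) (hroot : ∀ n : ℕ, 0 < n → q ^ n ≠ 1) (a : A) (x : A) (hx : a * x = x * a) :
    (∀ n : ℕ, 1 ≤ n → Smap q a n x = 0 ∧ Smap' q a n x = 0) ∧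
    (∀ N : ℕ, ∑ n ∈ Finset.range (N + 1), Smap q a n x = x ∧
      ∑ n ∈ Finset.range (N + 1), Smap' q a n x = x) :=
  stmt19_general q a x hx
end
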